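/- arXiv:2407.16177 — 3 statements merged into one kernel-verified Lean document; each statement's English description precedes it below -/
import Mathlib

section
/- Let μ be the Lebesgue measure on ℝⁿ, let D ⊆ ℝⁿ be a measurable set with μ(D) < ∞, let T be a nonempty finite set, and let f : D → T be a measurable function. Then for every ε > 0 there exist m ∈ ℕ, affine maps l₁, …, l_m : ℝⁿ → ℝ, and a function h : ({0,1}^m) → T such that the set E = {x ∈ D : h(s(x)) ≠ f(x)} has μ(E) < ε, where s(x) ∈ {0,1}^m is the sign pattern s(x)_j = 1 if l_j(x) ≥ 0 and s(x)_j = 0 otherwise. In particular, the sign-pattern function L(x) = h(s(x)) agrees with f on all of D ∖ E. -/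
open MeasureTheory Metric Set ENNReal


/-- `y ↦ y i - a` as an affine map. -/
noncomputable def projSub {n : ℕ} (i : Fin n) (a : ℝ) : (Fin n → ℝ) →ᵃ[ℝ] ℝ where
  toFun y := y i - a
  linear := LinearMap.proj i
  map_vadd' p v := by
    simp only [vadd_eq_add, Pi.add_apply, LinearMap.proj_apply]
    ring

/-- `y ↦ a - y i` as an affine map. -/
noncomputable def subProj {n : ℕ} (i : Fin n) (a : ℝ) : (Fin n → ℝ) →ᵃ[ℝ] ℝ where
  toFun y := a - y i
  linear := -LinearMap.proj i
  map_vadd' p v := by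
    simp only [vadd_eq_add, Pi.add_apply, LinearMap.neg_apply, LinearMap.proj_apply]
    ring

@[simp] lemma projSub_apply {n : ℕ} (i : Fin n) (a : ℝ) (y : Fin n → ℝ) :
    projSub i a y = y i - a := rfl

@[simp] lemma subProj_apply {n : ℕ} (i : Fin n) (a : ℝ) (y : Fin n → ℝ) :
    subProj i a y = a - y i := rfl

lemma approx_by_balls {n : ℕ} (A : Set (Fin n → ℝ)) (hA : MeasurableSet A)
    (hfin : volume A ≠ ⊤) {δ : ℝ≥0∞} (hδ : δ ≠ 0) :
    ∃ s : Finset ((Fin n → ℝ) × ℝ), (∀ p ∈ s, 0 < p.2) ∧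
      volume ((A \ (⋃ p ∈ s, Metric.ball p.1 p.2)) ∪ ((⋃ p ∈ s, Metric.ball p.1 p.2) \ A))
        < δ := by
  classical
  have hδ2 : δ / 2 ≠ 0 := by simp [hδ]
  obtain ⟨U, hAU, hUo, hUfin, hUA⟩ := hA.exists_isOpen_diff_lt hfin hδ2
  obtain ⟨K, hKA, hKc, hAK⟩ := hA.exists_isCompact_diff_lt hfin hδ2
  have hball : ∀ x : Fin n → ℝ, ∃ r : ℝ, 0 < r ∧ (x ∈ K → Metric.ball x r ⊆ U) := by
    intro x
    by_cases hx : x ∈ K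
    · obtain ⟨r, hr, hrU⟩ := Metric.isOpen_iff.1 hUo x (hAU (hKA hx))
      exact ⟨r, hr, fun _ => hrU⟩
    · exact ⟨1, one_pos, fun h => absurd h hx⟩
  choose rad hrad hradU using hball
  obtain ⟨t, htK, htcov⟩ := hKc.elim_nhds_subcover (fun x => Metric.ball x (rad x))
    (fun x _ => Metric.ball_mem_nhds x (hrad x))
  refine ⟨t.image (fun x => (x, rad x)), ?_, ?_⟩
  · intro p hp
    simp only [Finset.mem_image] at hp
    obtain ⟨x, -, rfl⟩ := hp
    exact hrad x
  · set B : Set (Fin n → ℝ) := ⋃ p ∈ t.image (fun x => (x, rad x)), Metric.ball p.1 p.2 with hB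
    have hKB : K ⊆ B := by
      refine htcov.trans ?_
      refine Set.iUnion₂_subset fun x hx => ?_
      intro y hy
      exact Set.mem_biUnion (Finset.mem_image_of_mem (fun x => (x, rad x)) hx) hy
    have hBU : B ⊆ U := by
      refine Set.iUnion₂_subset fun p hp => ?_
      simp only [Finset.mem_image] at hp
      obtain ⟨x, hx, rfl⟩ := hp
      exact hradU x (htK x hx)
    calc volume ((A \ B) ∪ (B \ A)) ≤ volume (A \ K) + volume (U \ A) := by
          refine (measure_union_le _ _).trans ?_
          exact add_le_add (measure_mono (Set.diff_subset_diff_right hKB))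
            (measure_mono (Set.diff_subset_diff_left hBU))
      _ < δ / 2 + δ / 2 := ENNReal.add_lt_add hAK hUA
      _ = δ := ENNReal.add_halves δ


/-- The sign pattern of `x` with respect to the affine maps `l₁, …, l_m`:
`s(x)_j = 1` (i.e. `true`) iff `l_j(x) ≥ 0`. -/
noncomputable def signPattern {n m : ℕ} (l : Fin m → ((Fin n → ℝ) →ᵃ[ℝ] ℝ)) (x : Fin n → ℝ) :
    Fin m → Bool :=
  fun j => decide (0 ≤ l j x)

/-- Universal approximation by linear logical (sign-pattern) functions:
for a measurable `f : D → T` with `μ D < ∞` and `T` finite nonempty, and any `ε > 0`,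
there are finitely many affine maps `l₁, …, l_m` and `h : {0,1}^m → T` such that the
set `E = {x ∈ D : h(s(x)) ≠ f(x)}` has measure `< ε`; in particular `h ∘ s` agrees
with `f` on `D \ E`. -/
theorem universal_approximation_by_sign_pattern_functions
    (n : ℕ) (D : Set (Fin n → ℝ)) (hD : MeasurableSet D) (hDfin : volume D < ⊤)
    (T : Type) [Fintype T] [Nonempty T]
    (f : (Fin n → ℝ) → T) (hf : ∀ t : T, MeasurableSet {x ∈ D | f x = t})
    (ε : ℝ) (hε : 0 < ε) :
    ∃ (m : ℕ) (l : Fin m → ((Fin n → ℝ) →ᵃ[ℝ] ℝ)) (h : (Fin m → Bool) → T),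
      volume {x ∈ D | h (signPattern l x) ≠ f x} < ENNReal.ofReal ε ∧
      ∀ x ∈ D \ {x ∈ D | h (signPattern l x) ≠ f x}, h (signPattern l x) = f x := by
  classical
  set cT : ℕ := Fintype.card T with hcT
  set δ : ℝ≥0∞ := ENNReal.ofReal (ε / (cT + 1)) with hδdef
  have hδ : δ ≠ 0 := by
    rw [hδdef]
    simp only [ne_eq, ENNReal.ofReal_eq_zero, not_le]
    positivity
  have hAfin : ∀ t : T, volume {x ∈ D | f x = t} ≠ ⊤ := fun t =>
    ((measure_mono (fun x hx => hx.1)).trans_lt hDfin).ne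
  choose s hs happ using fun t : T => approx_by_balls _ (hf t) (hAfin t) hδ
  set B : T → Set (Fin n → ℝ) := fun t => ⋃ p ∈ s t, Metric.ball p.1 p.2 with hBdef
  set L : ((Σ t : T, {p // p ∈ s t}) × Fin n × Bool) → ((Fin n → ℝ) →ᵃ[ℝ] ℝ) := fun q =>
    if q.2.2 then projSub q.2.1 (q.1.2.1.1 q.2.1 + q.1.2.1.2)
    else subProj q.2.1 (q.1.2.1.1 q.2.1 - q.1.2.1.2) with hL
  set Q : T → (((Σ t : T, {p // p ∈ s t}) × Fin n × Bool) → Bool) → Prop := fun t σ =>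
    ∃ k : {p // p ∈ s t}, ∀ i : Fin n,
      σ ⟨⟨t, k⟩, i, true⟩ = false ∧ σ ⟨⟨t, k⟩, i, false⟩ = false with hQ
  have hQmem : ∀ (t : T) (x : Fin n → ℝ),
      Q t (fun q => decide (0 ≤ L q x)) ↔ x ∈ B t := by
    intro t x
    rw [hQ]
    constructor
    · rintro ⟨k, hk⟩
      have hr : 0 < k.1.2 := hs t k.1 k.2
      have hxk : x ∈ Metric.ball k.1.1 k.1.2 := by
        rw [Metric.mem_ball, dist_pi_lt_iff hr]
        intro i
        have h1 := (hk i).1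
        have h2 := (hk i).2
        simp only [hL, Bool.false_eq_true, if_true, if_false, projSub_apply, subProj_apply,
          decide_eq_false_iff_not, not_le] at h1 h2
        rw [Real.dist_eq, abs_lt]
        constructor <;> linarith
      exact Set.mem_biUnion k.2 hxk
    · intro hx
      rw [hBdef] at hx
      simp only [Set.mem_iUnion] at hx
      obtain ⟨p, hp, hxp⟩ := hx
      refine ⟨⟨p, hp⟩, fun i => ?_⟩
      have hr : 0 < p.2 := hs t p hp
      rw [Metric.mem_ball, dist_pi_lt_iff hr] at hxp
      have hxi := hxp i
      rw [Real.dist_eq, abs_lt] at hxi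
      constructor <;>
        · simp only [hL, Bool.false_eq_true, if_true, if_false, projSub_apply, subProj_apply,
            decide_eq_false_iff_not, not_le]
          linarith [hxi.1, hxi.2]
  set H0 : (((Σ t : T, {p // p ∈ s t}) × Fin n × Bool) → Bool) → T := fun σ =>
    if hq : ∃ t, Q t σ then hq.choose else Classical.arbitrary T with hH0
  set m := Fintype.card ((Σ t : T, {p // p ∈ s t}) × Fin n × Bool) with hm
  set e : Fin m ≃ ((Σ t : T, {p // p ∈ s t}) × Fin n × Bool) :=
    (Fintype.equivFin _).symm with he
  refine ⟨m, fun j => L (e j), fun σ => H0 (fun q => σ (e.symm q)), ?_, ?_⟩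
  · have hset : {x ∈ D | H0 (fun q => signPattern (fun j => L (e j)) x (e.symm q)) ≠ f x} =
        {x ∈ D | H0 (fun q => decide (0 ≤ L q x)) ≠ f x} := by
      ext x
      simp only [Set.mem_sep_iff, signPattern, Equiv.apply_symm_apply]
    rw [hset]
    have hE : {x ∈ D | H0 (fun q => decide (0 ≤ L q x)) ≠ f x} ⊆
        ⋃ t : T, (({x ∈ D | f x = t} \ B t) ∪ (B t \ {x ∈ D | f x = t})) := by
      rintro x ⟨hxD, hxne⟩
      by_cases hq : ∃ t, Q t (fun q => decide (0 ≤ L q x))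
      · have h1 : H0 (fun q => decide (0 ≤ L q x)) = hq.choose := dif_pos hq
        have h2 : x ∈ B hq.choose := (hQmem _ x).1 hq.choose_spec
        refine Set.mem_iUnion.2 ⟨hq.choose, Or.inr ⟨h2, ?_⟩⟩
        rintro ⟨-, hfx⟩
        exact hxne (h1.trans hfx.symm)
      · refine Set.mem_iUnion.2 ⟨f x, Or.inl ⟨⟨hxD, rfl⟩, ?_⟩⟩
        intro hxB
        exact hq ⟨f x, (hQmem _ x).2 hxB⟩
    calc volume {x ∈ D | H0 (fun q => decide (0 ≤ L q x)) ≠ f x}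
        ≤ ∑ t : T, volume (({x ∈ D | f x = t} \ B t) ∪ (B t \ {x ∈ D | f x = t})) :=
          (measure_mono hE).trans (measure_iUnion_fintype_le _ _)
      _ ≤ ∑ _t : T, δ := Finset.sum_le_sum fun t _ => (happ t).le
      _ = (cT : ℝ≥0∞) * δ := by
          rw [Finset.sum_const, Finset.card_univ, nsmul_eq_mul, hcT]
      _ < ENNReal.ofReal ε := by
          have h2 : (cT : ℝ) / (cT + 1) < 1 := by
            rw [div_lt_one (by positivity)]
            linarith
          have h1 : (cT : ℝ) * (ε / (cT + 1)) < ε := by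
            calc (cT : ℝ) * (ε / (cT + 1)) = ((cT : ℝ) / (cT + 1)) * ε := by ring
              _ < 1 * ε := mul_lt_mul_of_pos_right h2 hε
              _ = ε := one_mul ε
          calc (cT : ℝ≥0∞) * δ = ENNReal.ofReal ((cT : ℝ) * (ε / (cT + 1))) := by
                rw [hδdef, ← ENNReal.ofReal_natCast cT,
                  ← ENNReal.ofReal_mul (by positivity)]
            _ < ENNReal.ofReal ε := (ENNReal.ofReal_lt_ofReal_iff hε).2 h1
  · intro x hx
    by_contra hne
    exact hx.2 (Set.mem_sep hx.1 hne)
end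

section
/- Let f : (0,1] → {0,1} be defined by f(x) = 1 if x ∈ (2^{−n−1}, 2^{−n}] for some even integer n ≥ 0, and f(x) = 0 otherwise. Fix a positive integer N. Then there exists δ > 0 such that for every K ≥ 1 and every family f₁, …, f_K : (0,1] → {0,1} of step functions, each with at most N discontinuities, satisfying the consistency condition max(U(x), K − U(x)) > (3/4)K for all x ∈ (0,1] (where U(x) = #{i : f_i(x) = 1}), the majority-vote function g : (0,1] → {0,1}, defined by g(x) = 1 if U(x)/K ≥ 1/2 and g(x) = 0 otherwise, satisfies μ({x ∈ (0,1] : f(x) = g(x)}) ≤ 1 − δ, where μ is the Lebesgue measure. -/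
open MeasureTheory

/-- `g : (0,1] → T` is a step function with at most `M` discontinuities:
there is a partition `0 = α_{p+1} < α_p < ⋯ < α_1 < α_0 = 1` of `(0,1]` with
`p ≤ M`, into at most `M + 1` left-open right-closed intervals, on each of
which `g` is constant. -/
def IsStepFun {T : Type*} (M : ℕ) (g : ℝ → T) : Prop :=
  ∃ p ≤ M, ∃ α : Fin (p + 2) → ℝ,
    α 0 = 1 ∧ α (Fin.last (p + 1)) = 0 ∧ StrictAnti α ∧
    ∀ k : Fin (p + 1), ∃ c : T, ∀ x ∈ Set.Ioc (α k.succ) (α k.castSucc), g x = c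

open Classical in
/-- The alternating dyadic function `f : (0,1] → {0,1}`: `f(x) = 1` iff
`x ∈ (2^{-n-1}, 2^{-n}]` for some even `n ≥ 0`. -/
noncomputable def fDyadic (x : ℝ) : Bool :=
  decide (∃ n : ℕ, Even n ∧ x ∈ Set.Ioc ((2 : ℝ) ^ (-(n : ℤ) - 1)) ((2 : ℝ) ^ (-(n : ℤ))))

/-- `U(x) = #{i : f_i(x) = 1}`. -/
def Ucount {K : ℕ} (f : Fin K → ℝ → Bool) (x : ℝ) : ℕ :=
  (Finset.univ.filter fun i => f i x = true).card

/-- The majority-vote function: `g(x) = 1` iff `U(x)/K ≥ 1/2`. -/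
noncomputable def majority {K : ℕ} (f : Fin K → ℝ → Bool) (x : ℝ) : Bool :=
  decide ((1 : ℝ) / 2 ≤ (Ucount f x : ℝ) / K)

/- ### Auxiliary lemmas -/

lemma dyadic_mem_unique {x : ℝ} {n m : ℕ}
    (hn : x ∈ Set.Ioc ((2:ℝ)^(-(n:ℤ)-1)) ((2:ℝ)^(-(n:ℤ))))
    (hm : x ∈ Set.Ioc ((2:ℝ)^(-(m:ℤ)-1)) ((2:ℝ)^(-(m:ℤ)))) : n = m := by
  by_contra hne
  rcases Nat.lt_or_ge n m with h | h
  · have h' : (m:ℤ) ≥ (n:ℤ) + 1 := by exact_mod_cast h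
    have : (2:ℝ)^(-(m:ℤ)) ≤ (2:ℝ)^(-(n:ℤ)-1) := zpow_le_zpow_right₀ one_le_two (by omega)
    linarith [hn.1, hm.2]
  · have hlt : m < n := by omega
    have h' : (n:ℤ) ≥ (m:ℤ) + 1 := by exact_mod_cast hlt
    have : (2:ℝ)^(-(n:ℤ)) ≤ (2:ℝ)^(-(m:ℤ)-1) := zpow_le_zpow_right₀ one_le_two (by omega)
    linarith [hm.1, hn.2]

lemma fDyadic_eq {x : ℝ} {n : ℕ}
    (h : x ∈ Set.Ioc ((2:ℝ)^(-(n:ℤ)-1)) ((2:ℝ)^(-(n:ℤ)))) :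
    fDyadic x = decide (Even n) := by
  unfold fDyadic
  apply decide_eq_decide.mpr
  constructor
  · rintro ⟨m, hm, hxm⟩
    rw [dyadic_mem_unique h hxm]
    exact hm
  · exact fun he => ⟨n, he, h⟩

lemma count_strict_incr (v : ℕ → ℕ) :
    ∀ m : ℕ, (∀ j < m, v j ≤ v (j+1)) →
      v 0 ≤ v m ∧ ((Finset.range m).filter fun j => v j < v (j+1)).card + v 0 ≤ v m := by
  intro m
  induction m with
  | zero => intro _; simp
  | succ m ih =>
    intro hmono
    obtain ⟨h0, hc⟩ := ih (fun j hj => hmono j (by omega))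
    have hstep := hmono m (by omega)
    rw [Finset.range_add_one, Finset.filter_insert]
    by_cases hv : v m < v (m+1)
    · rw [if_pos hv, Finset.card_insert_of_notMem (by simp)]
      constructor <;> omega
    · rw [if_neg hv]
      constructor <;> omega

lemma stepfun_flips {N : ℕ} {h : ℝ → Bool} (hs : IsStepFun N h) (m : ℕ) (x : ℕ → ℝ)
    (hx : ∀ j ≤ m, x j ∈ Set.Ioc (0:ℝ) 1) (hd : ∀ j < m, x (j+1) < x j) :
    (((Finset.range m).filter fun j => h (x j) ≠ h (x (j+1))).card) ≤ N := by
  classical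
  obtain ⟨p, hpN, α, hα0, hαlast, hanti, hc⟩ := hs
  have exk : ∀ y : ℝ, y ∈ Set.Ioc (0:ℝ) 1 → ∃ k : Fin (p+1),
      α k.succ < y ∧ y ≤ α k.castSucc := by
    intro y hy
    set T := Finset.univ.filter (fun j : Fin (p+2) => y ≤ α j) with hT
    have h0T : (0 : Fin (p+2)) ∈ T := by simp [hT, hα0, hy.2]
    have hTne : T.Nonempty := ⟨0, h0T⟩
    set k' := T.max' hTne with hk'
    have hk'T : k' ∈ T := T.max'_mem hTne
    have hyk' : y ≤ α k' := by simpa [hT] using hk'T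
    have hk'ne : k' ≠ Fin.last (p+1) := by
      intro hEq
      rw [hEq, hαlast] at hyk'
      exact absurd hy.1 (not_lt.mpr hyk')
    have hval : k'.val < p + 1 := Fin.val_lt_last hk'ne
    refine ⟨⟨k'.val, hval⟩, ?_, ?_⟩
    · by_contra hle
      push_neg at hle
      have hsucc : (Fin.succ ⟨k'.val, hval⟩ : Fin (p+2)) = ⟨k'.val + 1, by omega⟩ := by
        apply Fin.ext; simp
      rw [hsucc] at hle
      have hmem : (⟨k'.val + 1, by omega⟩ : Fin (p+2)) ∈ T := by
        simp only [hT, Finset.mem_filter, Finset.mem_univ, true_and]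
        exact hle
      have hle2 : (⟨k'.val + 1, by omega⟩ : Fin (p+2)) ≤ k' := T.le_max' _ hmem
      rw [Fin.le_def] at hle2
      simp at hle2
    · have hcs : (Fin.castSucc ⟨k'.val, hval⟩ : Fin (p+2)) = k' := by
        apply Fin.ext; simp
      rw [hcs]; exact hyk'
  let idx : ℕ → Fin (p+1) := fun j =>
    if hj : j ≤ m then (exk (x j) (hx j hj)).choose else 0
  have hidx : ∀ j, ∀ hj : j ≤ m, α (idx j).succ < x j ∧ x j ≤ α (idx j).castSucc := by
    intro j hj
    simp only [idx, dif_pos hj]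
    exact (exk (x j) (hx j hj)).choose_spec
  set v : ℕ → ℕ := fun j => (idx j).val with hv
  have hmono : ∀ j < m, v j ≤ v (j+1) := by
    intro j hj
    by_contra hlt
    push_neg at hlt
    obtain ⟨h1, h2⟩ := hidx j (le_of_lt hj)
    obtain ⟨h3, h4⟩ := hidx (j+1) hj
    have hle : (idx (j+1)).succ ≤ (idx j).castSucc := by
      rw [Fin.le_def]
      simp only [Fin.val_succ, Fin.coe_castSucc]
      simp only [hv] at hlt
      omega
    have hαle := hanti.antitone hle
    have := hd j hj
    linarith
  obtain ⟨h0m, hcount⟩ := count_strict_incr v m hmono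
  have hsub : ((Finset.range m).filter fun j => h (x j) ≠ h (x (j+1))).card ≤
      ((Finset.range m).filter fun j => v j < v (j+1)).card := by
    apply Finset.card_le_card
    intro j hj
    rw [Finset.mem_filter] at hj ⊢
    obtain ⟨hjm, hne⟩ := hj
    rw [Finset.mem_range] at hjm
    refine ⟨Finset.mem_range.mpr hjm, ?_⟩
    have hle := hmono j hjm
    rcases lt_or_eq_of_le hle with h' | h'
    · exact h'
    · exfalso
      have hEq : idx j = idx (j+1) := Fin.ext h'
      obtain ⟨c, hcc⟩ := hc (idx j)
      obtain ⟨h1, h2⟩ := hidx j (le_of_lt hjm)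
      obtain ⟨h3, h4⟩ := hidx (j+1) hjm
      rw [← hEq] at h3 h4
      exact hne (by rw [hcc _ ⟨h1, h2⟩, hcc _ ⟨h3, h4⟩])
  have hlast : v m ≤ p := Nat.lt_succ_iff.mp (idx m).isLt
  omega

lemma Ucount_le {K : ℕ} (f : Fin K → ℝ → Bool) (x : ℝ) : Ucount f x ≤ K :=
  le_trans (Finset.card_filter_le _ _) (by simp)

lemma flip_nat {K : ℕ} (f : Fin K → ℝ → Bool) (x y : ℝ) :
    Ucount f x ≤ Ucount f y + (Finset.univ.filter fun i => f i x ≠ f i y).card := by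
  have hsub : (Finset.univ.filter fun i : Fin K => f i x = true) ⊆
      (Finset.univ.filter fun i => f i y = true) ∪
        (Finset.univ.filter fun i => f i x ≠ f i y) := by
    intro i hi
    simp only [Finset.mem_filter, Finset.mem_union, Finset.mem_univ, true_and] at hi ⊢
    by_cases h : f i y = true
    · exact Or.inl h
    · exact Or.inr (fun hEq => h (hEq ▸ hi))
  exact le_trans (Finset.card_le_card hsub) (Finset.card_union_le _ _)

lemma flip_comm {K : ℕ} (f : Fin K → ℝ → Bool) (x y : ℝ) :
    (Finset.univ.filter fun i : Fin K => f i y ≠ f i x) =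
      (Finset.univ.filter fun i => f i x ≠ f i y) := by
  ext i
  simp only [Finset.mem_filter, Finset.mem_univ, true_and]
  exact ⟨Ne.symm, Ne.symm⟩

/-- There is `δ > 0` such that for every family `f₁, …, f_K : (0,1] → {0,1}` of step
functions with at most `N` discontinuities each, whose consistency
`max(U(x), K - U(x)) > (3/4)K` holds for all `x ∈ (0,1]`, the majority vote `g`
agrees with the alternating dyadic function `f` on a set of measure at most `1 - δ`. -/
theorem majority_vote_of_bounded_step_functions_misses_dyadic_function
    (N : ℕ) (hN : 0 < N) :
    ∃ δ > (0 : ℝ), ∀ K : ℕ, 1 ≤ K → ∀ f : Fin K → ℝ → Bool,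
      (∀ i, IsStepFun N (f i)) →
      (∀ x ∈ Set.Ioc (0 : ℝ) 1,
        (3 / 4 : ℝ) * K < max ((Ucount f x : ℝ)) ((K : ℝ) - (Ucount f x : ℝ))) →
      volume {x ∈ Set.Ioc (0 : ℝ) 1 | fDyadic x = majority f x} ≤
        ENNReal.ofReal (1 - δ) := by
  refine ⟨(2:ℝ)^(-2*(N:ℤ)-2), zpow_pos two_pos _, ?_⟩
  intro K hK f hstep hcons
  have hKr : (1:ℝ) ≤ K := by exact_mod_cast hK
  have hK0 : (0:ℝ) < K := by linarith
  have hmajU : ∀ x ∈ Set.Ioc (0:ℝ) 1,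
      (majority f x = true → (3/4:ℝ)*K < Ucount f x) ∧
      (majority f x = false → (Ucount f x : ℝ) < (1/4)*K) := by
    intro x hx
    have hcx := hcons x hx
    have hUle : (Ucount f x : ℝ) ≤ K := by exact_mod_cast Ucount_le f x
    have hU0 : (0:ℝ) ≤ Ucount f x := Nat.cast_nonneg _
    constructor
    · intro hm
      have hm' : (1:ℝ)/2 ≤ (Ucount f x : ℝ)/K := by simpa [majority] using hm
      have h2 : (K:ℝ)/2 ≤ Ucount f x := by
        rw [div_le_div_iff₀ (by norm_num) hK0] at hm'
        linarith
      rcases lt_max_iff.mp hcx with h | h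
      · exact h
      · linarith
    · intro hm
      have hm' : ¬ ((1:ℝ)/2 ≤ (Ucount f x : ℝ)/K) := by
        intro hge
        simp [majority] at hm
        linarith
      push_neg at hm'
      have h2 : (Ucount f x : ℝ) < K/2 := by
        rw [div_lt_div_iff₀ hK0 (by norm_num)] at hm'
        linarith
      rcases lt_max_iff.mp hcx with h | h
      · linarith
      · linarith
  have key : ∃ n : ℕ, n ≤ 2*N+1 ∧ ∀ y ∈ Set.Ioc ((2:ℝ)^(-(n:ℤ)-1)) ((2:ℝ)^(-(n:ℤ))),
      fDyadic y ≠ majority f y := by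
    by_contra hcon
    push_neg at hcon
    have hex : ∀ n : ℕ, ∃ y : ℝ, n ≤ 2*N+1 →
        (y ∈ Set.Ioc ((2:ℝ)^(-(n:ℤ)-1)) ((2:ℝ)^(-(n:ℤ))) ∧ fDyadic y = majority f y) := by
      intro n
      by_cases hn : n ≤ 2*N+1
      · obtain ⟨y, hy1, hy2⟩ := hcon n hn
        exact ⟨y, fun _ => ⟨hy1, hy2⟩⟩
      · exact ⟨0, fun h => absurd h hn⟩
    choose x hxp using hex
    have hxmem : ∀ n, n ≤ 2*N+1 → x n ∈ Set.Ioc ((2:ℝ)^(-(n:ℤ)-1)) ((2:ℝ)^(-(n:ℤ))) :=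
      fun n hn => (hxp n hn).1
    have hagree : ∀ n, n ≤ 2*N+1 → fDyadic (x n) = majority f (x n) :=
      fun n hn => (hxp n hn).2
    have hxIoc : ∀ n, n ≤ 2*N+1 → x n ∈ Set.Ioc (0:ℝ) 1 := by
      intro n hn
      obtain ⟨h1, h2⟩ := hxmem n hn
      constructor
      · exact lt_trans (zpow_pos two_pos _) h1
      · calc x n ≤ (2:ℝ)^(-(n:ℤ)) := h2
          _ ≤ (2:ℝ)^(0:ℤ) := zpow_le_zpow_right₀ one_le_two (by omega)
          _ = 1 := zpow_zero 2
    have hxdec : ∀ n, n < 2*N+1 → x (n+1) < x n := by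
      intro n hn
      have h2 := (hxmem (n+1) (by omega)).2
      have h1 := (hxmem n (by omega)).1
      have hcast : (2:ℝ)^(-((n+1:ℕ):ℤ)) = (2:ℝ)^(-(n:ℤ)-1) := by
        congr 1
        push_cast
        ring
      rw [hcast] at h2
      linarith
    have hg : ∀ n, n ≤ 2*N+1 → majority f (x n) = decide (Even n) := by
      intro n hn
      rw [← hagree n hn, fDyadic_eq (hxmem n hn)]
    have hstep_lb : ∀ j, j < 2*N+1 →
        (K:ℝ)/2 < ((Finset.univ.filter fun i => f i (x j) ≠ f i (x (j+1))).card : ℝ) := by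
      intro j hj
      have hgj := hg j (by omega)
      have hgj1 := hg (j+1) (by omega)
      have hIj := hxIoc j (by omega)
      have hIj1 := hxIoc (j+1) (by omega)
      have hflip1 := flip_nat f (x j) (x (j+1))
      have hflip2 := flip_nat f (x (j+1)) (x j)
      rw [flip_comm] at hflip2
      have hflip1' : (Ucount f (x j) : ℝ) ≤ Ucount f (x (j+1)) +
          ((Finset.univ.filter fun i => f i (x j) ≠ f i (x (j+1))).card : ℝ) := by
        exact_mod_cast hflip1
      have hflip2' : (Ucount f (x (j+1)) : ℝ) ≤ Ucount f (x j) +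
          ((Finset.univ.filter fun i => f i (x j) ≠ f i (x (j+1))).card : ℝ) := by
        exact_mod_cast hflip2
      by_cases hE : Even j
      · have h1 : majority f (x j) = true := by rw [hgj]; simp [hE]
        have h2 : majority f (x (j+1)) = false := by
          rw [hgj1]; simp [Nat.even_add_one, hE]
        have hU1 := (hmajU _ hIj).1 h1
        have hU2 := (hmajU _ hIj1).2 h2
        linarith
      · have h1 : majority f (x j) = false := by rw [hgj]; simp [hE]
        have h2 : majority f (x (j+1)) = true := by
          rw [hgj1]; simp [Nat.even_add_one, hE]
        have hU1 := (hmajU _ hIj).2 h1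
        have hU2 := (hmajU _ hIj1).1 h2
        linarith
    have hsum_ub : (∑ j ∈ Finset.range (2*N+1),
        (Finset.univ.filter fun i => f i (x j) ≠ f i (x (j+1))).card) ≤ K * N := by
      have h1 : ∀ j ∈ Finset.range (2*N+1),
          (Finset.univ.filter fun i : Fin K => f i (x j) ≠ f i (x (j+1))).card =
          ∑ i : Fin K, if f i (x j) ≠ f i (x (j+1)) then 1 else 0 := by
        intro j _
        rw [Finset.card_filter]
      rw [Finset.sum_congr rfl h1, Finset.sum_comm]
      have h2 : ∀ i : Fin K,
          (∑ j ∈ Finset.range (2*N+1), if f i (x j) ≠ f i (x (j+1)) then 1 else 0) ≤ N := by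
        intro i
        rw [← Finset.card_filter]
        exact stepfun_flips (hstep i) (2*N+1) x hxIoc hxdec
      refine le_trans (Finset.sum_le_sum fun i _ => h2 i) ?_
      simp [Finset.sum_const, Finset.card_univ, mul_comm]
    have hrne : (Finset.range (2*N+1)).Nonempty := ⟨0, by simp⟩
    have hlb := Finset.sum_lt_sum_of_nonempty hrne
      (fun j hj => hstep_lb j (Finset.mem_range.mp hj))
    rw [Finset.sum_const, Finset.card_range, nsmul_eq_mul] at hlb
    have hcast : (∑ j ∈ Finset.range (2*N+1),
        ((Finset.univ.filter fun i => f i (x j) ≠ f i (x (j+1))).card : ℝ)) ≤ (K:ℝ) * N := by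
      rw [← Nat.cast_sum]
      exact_mod_cast hsum_ub
    have hNK : ((2*N+1 : ℕ):ℝ) * ((K:ℝ)/2) = (K:ℝ)*N + (K:ℝ)/2 := by
      push_cast
      ring
    linarith
  obtain ⟨n, hn, hdis⟩ := key
  set a := (2:ℝ)^(-(n:ℤ)-1) with ha
  set b := (2:ℝ)^(-(n:ℤ)) with hb
  have ha0 : 0 < a := zpow_pos two_pos _
  have hb1 : b ≤ 1 := by
    calc b ≤ (2:ℝ)^(0:ℤ) := zpow_le_zpow_right₀ one_le_two (by omega)
      _ = 1 := zpow_zero 2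
  have h2a : a = b * 2⁻¹ := by
    rw [ha, hb]
    rw [← zpow_sub_one₀ (by norm_num : (2:ℝ) ≠ 0)]
  have hδa : (2:ℝ)^(-2*(N:ℤ)-2) ≤ a := by
    rw [ha]
    apply zpow_le_zpow_right₀ one_le_two
    have hnz : (n:ℤ) ≤ 2*(N:ℤ)+1 := by exact_mod_cast hn
    omega
  have hsubset : {x ∈ Set.Ioc (0:ℝ) 1 | fDyadic x = majority f x} ⊆
      Set.Ioc (0:ℝ) a ∪ Set.Ioc b 1 := by
    rintro y ⟨hy, hEq⟩
    have hnotI : y ∉ Set.Ioc a b := fun hyI => hdis y hyI hEq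
    rcases le_or_gt y a with hya | hya
    · exact Or.inl ⟨hy.1, hya⟩
    · refine Or.inr ⟨?_, hy.2⟩
      by_contra hyb
      push_neg at hyb
      exact hnotI ⟨hya, hyb⟩
  calc volume {x ∈ Set.Ioc (0:ℝ) 1 | fDyadic x = majority f x}
      ≤ volume (Set.Ioc (0:ℝ) a ∪ Set.Ioc b 1) := measure_mono hsubset
    _ ≤ volume (Set.Ioc (0:ℝ) a) + volume (Set.Ioc b 1) := measure_union_le _ _
    _ = ENNReal.ofReal (a - 0) + ENNReal.ofReal (1 - b) := by
        rw [Real.volume_Ioc, Real.volume_Ioc]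
    _ = ENNReal.ofReal ((a - 0) + (1 - b)) :=
        (ENNReal.ofReal_add (by linarith) (by linarith)).symm
    _ ≤ ENNReal.ofReal (1 - (2:ℝ)^(-2*(N:ℤ)-2)) := by
        apply ENNReal.ofReal_le_ofReal
        have : b = 2 * a := by rw [h2a]; ring
        linarith
end

section
/- Fix a positive integer N, let K ≥ 1, and let f₁, …, f_K : (0,1] → {0,1} be step functions, each with at most N discontinuities, satisfying the consistency condition max(U(x), K − U(x)) > (3/4)K for all x ∈ (0,1], where U(x) = #{i : f_i(x) = 1}. Then the majority-vote function g : (0,1] → {0,1}, defined by g(x) = 1 if U(x)/K ≥ 1/2 and g(x) = 0 otherwise, is a step function with at most 2N − 1 discontinuities; that is, there is a partition of (0,1] into at most 2N left-open right-closed intervals on each of which g is constant. -/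
open MeasureTheory

/-- `g` is constant between consecutive points of `B` within `(0,1]`. -/
def StepOn {T : Type*} (g : ℝ → T) (B : Finset ℝ) : Prop :=
  ∀ x ∈ Set.Ioc (0:ℝ) 1, ∀ y ∈ Set.Ioc (0:ℝ) 1, x ≤ y →
    (∀ b ∈ B, ¬ (x ≤ b ∧ b < y)) → g x = g y

theorem isStepFun_to_stepOn {T : Type*} {M : ℕ} {g : ℝ → T} (h : IsStepFun M g) :
    ∃ B : Finset ℝ, ↑B ⊆ Set.Ioo (0:ℝ) 1 ∧ B.card ≤ M ∧ StepOn g B := by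
  obtain ⟨p, hp, α, h1, h0, hanti, hconst⟩ := h
  refine ⟨Finset.image (fun j : Fin p => α ⟨j.val + 1, by omega⟩) Finset.univ, ?_, ?_, ?_⟩
  · intro b hb
    simp only [Finset.coe_image, Set.mem_image] at hb
    obtain ⟨j, -, rfl⟩ := hb
    constructor
    · rw [← h0]; exact hanti (by simp [Fin.lt_def, Fin.last])
    · rw [← h1]; exact hanti (by simp [Fin.lt_def])
  · exact le_trans (Finset.card_image_le) (by simp [hp])
  · intro x hx y hy hxy hnb
    have hne : (Finset.univ.filter (fun j : Fin (p+2) => α j < x)).Nonempty := by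
      refine ⟨Fin.last (p+1), ?_⟩
      simp only [Finset.mem_filter, Finset.mem_univ, true_and, h0]
      exact hx.1
    set S := Finset.univ.filter (fun j : Fin (p+2) => α j < x) with hS
    set j := S.min' hne with hj
    have hjS : j ∈ S := Finset.min'_mem _ _
    have hjx : α j < x := by simpa [hS] using hjS
    have hj0 : j ≠ 0 := by
      intro h; rw [h, h1] at hjx; linarith [hx.2]
    obtain ⟨kv, hkv⟩ : ∃ kv, j.val = kv + 1 := by
      rcases Nat.eq_zero_or_pos j.val with h | h
      · exact absurd (Fin.ext h) hj0
      · exact ⟨j.val - 1, by omega⟩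
    have hkvlt : kv < p + 1 := by have := j.2; omega
    set k : Fin (p+1) := ⟨kv, hkvlt⟩ with hk
    have hksucc : k.succ = j := by apply Fin.ext; simp [hk, Fin.succ]; omega
    have hkcs : ¬ (α k.castSucc < x) := by
      intro h
      have hmem : k.castSucc ∈ S := by simpa [hS] using h
      have hle := Finset.min'_le _ _ hmem
      rw [← hj] at hle
      have : j.val ≤ kv := hle
      omega
    push_neg at hkcs
    have hyk : y ≤ α k.castSucc := by
      by_contra hcon
      push_neg at hcon
      rcases Nat.eq_zero_or_pos kv with h | h
      · have : k.castSucc = (0 : Fin (p+2)) := Fin.ext (by simp [hk, h])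
        rw [this, h1] at hcon; linarith [hy.2]
      · have hkp : kv ≤ p := by omega
        have hmem : α k.castSucc ∈ Finset.image (fun j : Fin p => α ⟨j.val + 1, by omega⟩) Finset.univ := by
          refine Finset.mem_image.2 ⟨⟨kv - 1, by omega⟩, Finset.mem_univ _, ?_⟩
          congr 1
          apply Fin.ext; simp [hk]; omega
        exact hnb _ hmem ⟨hkcs, hcon⟩
    obtain ⟨c, hc⟩ := hconst k
    rw [hc x ⟨by rw [hksucc]; exact hjx, hkcs⟩, hc y ⟨by rw [hksucc]; linarith, hyk⟩]

theorem stepOn_to_isStepFun {T : Type*} {M : ℕ} {g : ℝ → T} {B : Finset ℝ}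
    (hB : ↑B ⊆ Set.Ioo (0:ℝ) 1) (hcard : B.card ≤ M) (h : StepOn g B) :
    IsStepFun M g := by
  set p := B.card with hp
  have e := B.orderIsoOfFin hp.symm
  -- β n : descending sequence on {0, ..., p+1}
  set β : ℕ → ℝ := fun n => if hn0 : n = 0 then 1 else if hn : n ≤ p then ((e ⟨p - n, by omega⟩ : B) : ℝ) else 0 with hβ
  have hmem : ∀ m : Fin p, ((e m : B) : ℝ) ∈ Set.Ioo (0:ℝ) 1 := fun m => hB (e m).2
  have hβ0 : β 0 = 1 := by simp [hβ]
  have hβtop : ∀ n, p < n → β n = 0 := by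
    intro n hn; simp only [hβ]; rw [dif_neg (by omega), dif_neg (by omega)]
  have hβmid : ∀ n, 1 ≤ n → n ≤ p → ∃ hlt : p - n < p, β n = ((e ⟨p - n, hlt⟩ : B) : ℝ) := by
    intro n h1 h2
    refine ⟨by omega, ?_⟩
    simp only [hβ]; rw [dif_neg (by omega), dif_pos h2]
  have hβanti : ∀ m n, m < n → n ≤ p + 1 → β n < β m := by
    intro m n hmn hn
    rcases Nat.eq_zero_or_pos m with hm0 | hm0
    · subst hm0; rw [hβ0]
      rcases le_or_gt n p with h2 | h2
      · obtain ⟨hlt, heq⟩ := hβmid n hmn h2; rw [heq]; exact (hmem _).2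
      · rw [hβtop n h2]; norm_num
    · obtain ⟨hltm, heqm⟩ := hβmid m hm0 (by omega); rw [heqm]
      rcases le_or_gt n p with h2 | h2
      · obtain ⟨hltn, heqn⟩ := hβmid n (by omega) h2; rw [heqn]
        have : (⟨p - n, hltn⟩ : Fin p) < ⟨p - m, hltm⟩ := by simp [Fin.lt_def]; omega
        exact_mod_cast e.strictMono this
      · rw [hβtop n h2]; exact (hmem _).1
  -- membership of B elements in β
  have hBval : ∀ b ∈ B, ∃ n, 1 ≤ n ∧ n ≤ p ∧ β n = b := by
    intro b hb
    obtain ⟨m, hm⟩ := e.surjective ⟨b, hb⟩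
    have hmp : (m : ℕ) < p := m.2
    refine ⟨p - m, by omega, by omega, ?_⟩
    obtain ⟨hlt, heq⟩ := hβmid (p - m) (by omega) (by omega)
    rw [heq]
    have : (⟨p - (p - (m:ℕ)), hlt⟩ : Fin p) = m := Fin.ext (by simp; omega)
    rw [this, hm]
  refine ⟨p, hcard, fun i => β i.val, hβ0, hβtop _ (by simp [Fin.last]), ?_, ?_⟩
  · intro i j hij
    exact hβanti i.val j.val hij (by have := j.2; omega)
  · intro k
    have hkcs : β k.val ∈ Set.Ioc (0:ℝ) 1 := by
      constructor
      · have := hβanti k.val (p+1) (by have := k.2; omega) (le_refl _)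
        rw [hβtop (p+1) (by omega)] at this; exact this
      · rcases Nat.eq_zero_or_pos k.val with h | h
        · rw [h, hβ0]
        · have := hβanti 0 k.val h (by have := k.2; omega)
          rw [hβ0] at this; exact le_of_lt this
    refine ⟨g (β k.val), ?_⟩
    intro x hx
    have hxIoc : x ∈ Set.Ioc (0:ℝ) 1 := by
      constructor
      · calc (0:ℝ) = β (p+1) := (hβtop _ (by omega)).symm
          _ ≤ β (k.val + 1) := by
              rcases Nat.lt_or_ge (k.val + 1) (p+1) with h | h
              · exact le_of_lt (hβanti _ _ h (le_refl _))
              · have : k.val + 1 = p + 1 := by have := k.2; omega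
                rw [this]
          _ < x := hx.1
      · exact le_trans hx.2 hkcs.2
    refine h x hxIoc (β k.val) hkcs hx.2 ?_
    intro b hb ⟨hxb, hby⟩
    obtain ⟨n, hn1, hnp, hnb⟩ := hBval b hb
    -- b = β n, with β (k+1) < b and b < β k, so k < n < k + 1
    have hlt1 : β n < β k.val := by rw [hnb]; exact hby
    have hlt2 : β (k.val+1) < β n := by rw [hnb]; exact lt_of_lt_of_le hx.1 hxb
    have hkn : k.val < n := by
      by_contra hcon
      push_neg at hcon
      rcases eq_or_lt_of_le hcon with h | h
      · rw [h] at hlt1; exact lt_irrefl _ hlt1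
      · exact absurd (hβanti n k.val h (by have := k.2; omega)) (by push_neg; exact le_of_lt hlt1)
    have hnk : n < k.val + 1 := by
      by_contra hcon
      push_neg at hcon
      rcases eq_or_lt_of_le hcon with h | h
      · rw [← h] at hlt2; exact lt_irrefl _ hlt2
      · exact absurd (hβanti (k.val+1) n h (by omega)) (by push_neg; exact le_of_lt hlt2)
    omega



theorem stepOn_mono {T : Type*} {g : ℝ → T} {B B' : Finset ℝ} (hBB : B ⊆ B')
    (h : StepOn g B) : StepOn g B' := by
  intro x hx y hy hxy hnb
  exact h x hx y hy hxy (fun b hb => hnb b (hBB hb))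

noncomputable def nxt (S : Finset ℝ) (b : ℝ) : ℝ :=
  if h : (S.filter (fun c => b < c)).Nonempty then (S.filter (fun c => b < c)).min' h else 1

theorem lt_nxt {S : Finset ℝ} {b : ℝ} (hb : b < 1) : b < nxt S b := by
  unfold nxt
  split
  · next h => have := Finset.min'_mem _ h; simp only [Finset.mem_filter] at this; exact this.2
  · exact hb

theorem nxt_le_one {S : Finset ℝ} (hS : ↑S ⊆ Set.Ioo (0:ℝ) 1) (b : ℝ) : nxt S b ≤ 1 := by
  unfold nxt
  split
  · next h =>
      have := Finset.min'_mem _ h; simp only [Finset.mem_filter] at this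
      exact le_of_lt (hS this.1).2
  · exact le_refl _

theorem nxt_le {S : Finset ℝ} {b c : ℝ} (hc : c ∈ S) (hbc : b < c) : nxt S b ≤ c := by
  have hm : c ∈ S.filter (fun c => b < c) := Finset.mem_filter.2 ⟨hc, hbc⟩
  unfold nxt
  rw [dif_pos ⟨c, hm⟩]
  exact Finset.min'_le _ _ hm

noncomputable def mid (S : Finset ℝ) (b : ℝ) : ℝ := (b + nxt S b) / 2

theorem mid_mem_Ioo {S : Finset ℝ} {b : ℝ} (hb : 0 < b) (hb1 : b < 1) :
    b < mid S b ∧ mid S b < nxt S b := by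
  have := lt_nxt (S := S) hb1
  constructor <;> (unfold mid; linarith)

theorem no_elt_between {S : Finset ℝ} {b c : ℝ} (hc : c ∈ S) (h1 : b < c) (h2 : c < nxt S b) :
    False := lt_irrefl _ (lt_of_le_of_lt (nxt_le hc h1) h2)


/-- If `f₁, …, f_K : (0,1] → {0,1}` are step functions with at most `N` discontinuities
each, whose consistency `max(U(x), K - U(x)) > (3/4)K` holds for all `x ∈ (0,1]`, then
the majority-vote function is a step function with at most `2N - 1` discontinuities,
i.e. `(0,1]` can be partitioned into at most `2N` left-open right-closed intervals on
each of which the majority vote is constant. -/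
theorem majority_vote_is_step_function_with_at_most_two_N_sub_one_discontinuities
    (N : ℕ) (hN : 0 < N) (K : ℕ) (hK : 1 ≤ K) (f : Fin K → ℝ → Bool)
    (hstep : ∀ i, IsStepFun N (f i))
    (hcons : ∀ x ∈ Set.Ioc (0 : ℝ) 1,
      (3 / 4 : ℝ) * K < max ((Ucount f x : ℝ)) ((K : ℝ) - (Ucount f x : ℝ))) :
    IsStepFun (2 * N - 1) (majority f) := by
  classical
  choose B hBsub hBcard hBstep using fun i => isStepFun_to_stepOn (hstep i)
  set Ball : Finset ℝ := Finset.univ.biUnion B with hBall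
  have hBallsub : ↑Ball ⊆ Set.Ioo (0:ℝ) 1 := by
    intro b hb
    simp only [hBall, Finset.coe_biUnion, Set.mem_iUnion, Finset.coe_univ, Set.mem_univ] at hb
    obtain ⟨i, -, hi⟩ := hb
    exact hBsub i hi
  have hBallstep : ∀ i, StepOn (f i) Ball :=
    fun i => stepOn_mono (fun b hb => Finset.mem_biUnion.2 ⟨i, Finset.mem_univ i, hb⟩) (hBstep i)
  -- majority is StepOn Ball
  have hUeq : ∀ x ∈ Set.Ioc (0:ℝ) 1, ∀ y ∈ Set.Ioc (0:ℝ) 1, x ≤ y →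
      (∀ b ∈ Ball, ¬ (x ≤ b ∧ b < y)) → Ucount f x = Ucount f y := by
    intro x hx y hy hxy hnb
    unfold Ucount
    congr 1
    apply Finset.filter_congr
    intro i _
    rw [hBallstep i x hx y hy hxy hnb]
  have hgstep : StepOn (majority f) Ball := by
    intro x hx y hy hxy hnb
    unfold majority
    rw [hUeq x hx y hy hxy hnb]
  -- facts about b ∈ Ball
  have hb01 : ∀ b ∈ Ball, 0 < b ∧ b < 1 := fun b hb => ⟨(hBallsub hb).1, (hBallsub hb).2⟩
  have hmid : ∀ b ∈ Ball, mid Ball b ∈ Set.Ioc (0:ℝ) 1 := by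
    intro b hb
    obtain ⟨h1, h2⟩ := hb01 b hb
    obtain ⟨h3, h4⟩ := mid_mem_Ioo (S := Ball) h1 h2
    exact ⟨lt_trans h1 h3, le_trans (le_of_lt h4) (nxt_le_one hBallsub b)⟩
  -- the jump set of the majority function
  set Bg : Finset ℝ := Ball.filter (fun b => majority f b ≠ majority f (mid Ball b)) with hBg
  have hBgsub : Bg ⊆ Ball := Finset.filter_subset _ _
  -- non-jump points have equal values
  have hnojump : ∀ b ∈ Ball, b ∉ Bg → majority f b = majority f (mid Ball b) := by
    intro b hb hnb
    by_contra hcon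
    exact hnb (Finset.mem_filter.2 ⟨hb, hcon⟩)
  -- key: for x in a gap right of b (≤ nxt), value equals value at mid
  have hgap : ∀ (h : ℝ → Bool), StepOn h Ball → ∀ b ∈ Ball, ∀ y, b < y → y ≤ nxt Ball b →
      y ∈ Set.Ioc (0:ℝ) 1 → h (mid Ball b) = h y := by
    intro h hh b hb y hby hynxt hy
    obtain ⟨h1, h2⟩ := hb01 b hb
    obtain ⟨h3, h4⟩ := mid_mem_Ioo (S := Ball) h1 h2
    have hmidIoc := hmid b hb
    have hnogap : ∀ u v : ℝ, b < u → v ≤ nxt Ball b → (∀ c ∈ Ball, ¬ (u ≤ c ∧ c < v)) → True := fun _ _ _ _ _ => trivial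
    rcases le_total (mid Ball b) y with hc | hc
    · exact hh _ hmidIoc _ hy hc (by
        intro c hc' ⟨hc1, hc2⟩
        exact no_elt_between hc' (lt_of_lt_of_le h3 hc1) (lt_of_lt_of_le hc2 hynxt))
    · exact (hh _ hy _ hmidIoc hc (by
        intro c hc' ⟨hc1, hc2⟩
        exact no_elt_between hc' (lt_of_lt_of_le hby hc1) (lt_of_lt_of_le hc2 (le_of_lt h4)))).symm
  -- StepOn of majority w.r.t. the jump set
  have hkey : ∀ n : ℕ, ∀ x ∈ Set.Ioc (0:ℝ) 1, ∀ y ∈ Set.Ioc (0:ℝ) 1, x ≤ y →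
      (Ball.filter (fun b => x ≤ b ∧ b < y)).card ≤ n →
      (∀ b ∈ Bg, ¬ (x ≤ b ∧ b < y)) → majority f x = majority f y := by
    intro n
    induction n with
    | zero =>
      intro x hx y hy hxy hcard hnb
      refine hgstep x hx y hy hxy ?_
      intro b hb hxby
      have : b ∈ Ball.filter (fun b => x ≤ b ∧ b < y) := Finset.mem_filter.2 ⟨hb, hxby⟩
      rw [Finset.card_eq_zero.1 (Nat.le_zero.1 hcard)] at this
      exact absurd this (Finset.notMem_empty b)
    | succ n ih =>
      intro x hx y hy hxy hcard hnb
      by_cases hA : ∀ b ∈ Ball, ¬ (x ≤ b ∧ b < y)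
      · exact hgstep x hx y hy hxy hA
      · push_neg at hA
        obtain ⟨b₀, hb₀, hxb₀, hb₀y⟩ := hA
        set S := Ball.filter (fun b => x ≤ b ∧ b < y) with hSdef
        have hSne : S.Nonempty := ⟨b₀, Finset.mem_filter.2 ⟨hb₀, hxb₀, hb₀y⟩⟩
        set b := S.max' hSne with hbdef
        have hbS : b ∈ S := Finset.max'_mem _ _
        have hbBall : b ∈ Ball := (Finset.mem_filter.1 hbS).1
        have hxb : x ≤ b := (Finset.mem_filter.1 hbS).2.1
        have hby : b < y := (Finset.mem_filter.1 hbS).2.2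
        have hbIoc : b ∈ Set.Ioc (0:ℝ) 1 := ⟨(hb01 b hbBall).1, le_of_lt (hb01 b hbBall).2⟩
        have hbnotBg : b ∉ Bg := fun h => hnb b h ⟨hxb, hby⟩
        -- y ≤ nxt Ball b
        have hynxt : y ≤ nxt Ball b := by
          by_contra hcon
          push_neg at hcon
          have h1 : nxt Ball b ∈ Ball := by
            unfold nxt at hcon ⊢
            split at hcon
            · next hne =>
                rw [dif_pos hne]
                exact (Finset.mem_filter.1 (Finset.min'_mem _ hne)).1
            · exact absurd hy.2 (by push_neg; exact hcon)
          have h2 : b < nxt Ball b := lt_nxt (hb01 b hbBall).2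
          have h3 : nxt Ball b ∈ S := Finset.mem_filter.2 ⟨h1, le_trans hxb (le_of_lt h2), hcon⟩
          have := Finset.le_max' _ _ h3
          rw [← hbdef] at this
          linarith
        have hstep1 : majority f b = majority f y := by
          rw [hnojump b hbBall hbnotBg]
          exact hgap (majority f) hgstep b hbBall y hby hynxt hy
        have hstep2 : majority f x = majority f b := by
          refine ih x hx b hbIoc hxb ?_ ?_
          · have hsub : Ball.filter (fun c => x ≤ c ∧ c < b) ⊆ S.erase b := by
              intro c hc
              simp only [Finset.mem_filter] at hc
              refine Finset.mem_erase.2 ⟨ne_of_lt hc.2.2, Finset.mem_filter.2 ⟨hc.1, hc.2.1, lt_trans hc.2.2 hby⟩⟩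
            calc (Ball.filter (fun c => x ≤ c ∧ c < b)).card ≤ (S.erase b).card := Finset.card_le_card hsub
              _ = S.card - 1 := Finset.card_erase_of_mem hbS
              _ ≤ n := by omega
          · intro c hc ⟨h1, h2⟩
            exact hnb c hc ⟨h1, lt_trans h2 hby⟩
        rw [hstep2, hstep1]
  have hBgstep : StepOn (majority f) Bg := by
    intro x hx y hy hxy hnb
    exact hkey (Ball.filter (fun b => x ≤ b ∧ b < y)).card x hx y hy hxy (le_refl _) hnb
  -- counting: each jump of majority forces > K/2 functions to jump
  have hjump : ∀ b ∈ Bg, K + 1 ≤ 2 * (Finset.univ.filter (fun i => f i b ≠ f i (mid Ball b))).card := by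
    intro b hbBg
    have hbBall : b ∈ Ball := hBgsub hbBg
    have hne : majority f b ≠ majority f (mid Ball b) := (Finset.mem_filter.1 hbBg).2
    have hbIoc : b ∈ Set.Ioc (0:ℝ) 1 := ⟨(hb01 b hbBall).1, le_of_lt (hb01 b hbBall).2⟩
    have hmIoc := hmid b hbBall
    have hKpos : (0:ℝ) < K := by exact_mod_cast hK
    set u := Ucount f b with hu
    set v := Ucount f (mid Ball b) with hv
    have huK : (u:ℝ) ≤ K := by
      have : u ≤ K := by
        calc u ≤ Finset.univ.card := Finset.card_filter_le _ _
          _ = K := Finset.card_univ.trans (Fintype.card_fin K)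
      exact_mod_cast this
    have hvK : (v:ℝ) ≤ K := by
      have : v ≤ K := by
        calc v ≤ Finset.univ.card := Finset.card_filter_le _ _
          _ = K := Finset.card_univ.trans (Fintype.card_fin K)
      exact_mod_cast this
    have hcb := hcons b hbIoc
    have hcm := hcons (mid Ball b) hmIoc
    rw [← hu] at hcb
    rw [← hv] at hcm
    set A := Finset.univ.filter (fun i => f i b = true) with hA
    set A' := Finset.univ.filter (fun i => f i (mid Ball b) = true) with hA'
    have hAcard : A.card = u := rfl
    have hA'card : A'.card = v := rfl
    by_cases h1 : (1:ℝ)/2 ≤ (u:ℝ)/K <;> by_cases h2 : (1:ℝ)/2 ≤ (v:ℝ)/K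
    · exfalso
      apply hne
      unfold majority
      rw [← hu, ← hv, decide_eq_decide]
      exact iff_of_true h1 h2
    · -- u large, v small
      have hu2 : (K:ℝ)/2 ≤ u := by rw [div_le_div_iff₀ (by norm_num) hKpos] at h1; linarith
      have hularge : (3/4:ℝ)*K < u := by
        rcases max_cases ((u:ℝ)) ((K:ℝ) - u) with ⟨hmax, -⟩ | ⟨hmax, -⟩ <;> rw [hmax] at hcb
        · exact hcb
        · linarith
      have hv2 : (v:ℝ) < K/2 := by
        push_neg at h2
        rw [div_lt_div_iff₀ hKpos (by norm_num)] at h2; linarith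
      have hvsmall : (v:ℝ) < (1/4:ℝ)*K := by
        rcases max_cases ((v:ℝ)) ((K:ℝ) - v) with ⟨hmax, -⟩ | ⟨hmax, -⟩ <;> rw [hmax] at hcm
        · linarith
        · linarith
      have hdiff : (K:ℝ) + 2*v < 2*u := by linarith
      have hdiffn : K + 2*v + 1 ≤ 2*u := by exact_mod_cast hdiff
      have hsub : A \ A' ⊆ Finset.univ.filter (fun i => f i b ≠ f i (mid Ball b)) := by
        intro i hi
        simp only [hA, hA', Finset.mem_sdiff, Finset.mem_filter, Finset.mem_univ, true_and] at hi ⊢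
        rw [hi.1]
        intro hcon
        exact hi.2 hcon.symm
      have hcard1 : u - v ≤ (A \ A').card := by
        rw [← hAcard, ← hA'card]
        exact Finset.le_card_sdiff _ _
      have := Finset.card_le_card hsub
      omega
    · -- u small, v large (symmetric)
      have hv2 : (K:ℝ)/2 ≤ v := by rw [div_le_div_iff₀ (by norm_num) hKpos] at h2; linarith
      have hvlarge : (3/4:ℝ)*K < v := by
        rcases max_cases ((v:ℝ)) ((K:ℝ) - v) with ⟨hmax, -⟩ | ⟨hmax, -⟩ <;> rw [hmax] at hcm
        · exact hcm
        · linarith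
      have hu2 : (u:ℝ) < K/2 := by
        push_neg at h1
        rw [div_lt_div_iff₀ hKpos (by norm_num)] at h1; linarith
      have husmall : (u:ℝ) < (1/4:ℝ)*K := by
        rcases max_cases ((u:ℝ)) ((K:ℝ) - u) with ⟨hmax, -⟩ | ⟨hmax, -⟩ <;> rw [hmax] at hcb
        · linarith
        · linarith
      have hdiff : (K:ℝ) + 2*u < 2*v := by linarith
      have hdiffn : K + 2*u + 1 ≤ 2*v := by exact_mod_cast hdiff
      have hsub : A' \ A ⊆ Finset.univ.filter (fun i => f i b ≠ f i (mid Ball b)) := by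
        intro i hi
        simp only [hA, hA', Finset.mem_sdiff, Finset.mem_filter, Finset.mem_univ, true_and] at hi ⊢
        intro hcon
        rw [hcon] at hi
        exact hi.2 hi.1
      have hcard1 : v - u ≤ (A' \ A).card := by
        rw [← hAcard, ← hA'card]
        exact Finset.le_card_sdiff _ _
      have := Finset.card_le_card hsub
      omega
    · exfalso
      apply hne
      unfold majority
      rw [← hu, ← hv, decide_eq_decide]
      exact iff_of_false h1 h2
  -- each function jumps at most at its own breakpoints
  have hjumpsub : ∀ i, Bg.filter (fun b => f i b ≠ f i (mid Ball b)) ⊆ B i := by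
    intro i b hb
    simp only [Finset.mem_filter] at hb
    obtain ⟨hbBg, hbne⟩ := hb
    have hbBall : b ∈ Ball := hBgsub hbBg
    by_contra hcon
    apply hbne
    obtain ⟨h1, h2⟩ := hb01 b hbBall
    obtain ⟨h3, h4⟩ := mid_mem_Ioo (S := Ball) h1 h2
    refine hBstep i b ⟨h1, le_of_lt h2⟩ (mid Ball b) (hmid b hbBall) (le_of_lt h3) ?_
    intro c hc ⟨hc1, hc2⟩
    have hcBall : c ∈ Ball := Finset.mem_biUnion.2 ⟨i, Finset.mem_univ i, hc⟩
    rcases eq_or_lt_of_le hc1 with h | h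
    · exact hcon (h ▸ hc)
    · exact no_elt_between hcBall h (lt_trans hc2 h4)
  -- sum the jumps
  have hsum : (K+1) * Bg.card ≤ 2 * (K * N) := by
    have step1 : (K+1) * Bg.card ≤ ∑ b ∈ Bg, 2 * (Finset.univ.filter (fun i => f i b ≠ f i (mid Ball b))).card := by
      rw [mul_comm]
      calc Bg.card * (K+1) = ∑ _b ∈ Bg, (K+1) := by rw [Finset.sum_const, smul_eq_mul]
        _ ≤ _ := Finset.sum_le_sum hjump
    have step2 : ∑ b ∈ Bg, (Finset.univ.filter (fun i => f i b ≠ f i (mid Ball b))).card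
        = ∑ i : Fin K, (Bg.filter (fun b => f i b ≠ f i (mid Ball b))).card := by
      simp_rw [Finset.card_filter]
      exact Finset.sum_comm
    have step3 : ∑ i : Fin K, (Bg.filter (fun b => f i b ≠ f i (mid Ball b))).card ≤ K * N := by
      calc ∑ i : Fin K, (Bg.filter (fun b => f i b ≠ f i (mid Ball b))).card
          ≤ ∑ i : Fin K, N := Finset.sum_le_sum (fun i _ => le_trans (Finset.card_le_card (hjumpsub i)) (hBcard i))
        _ = K * N := by rw [Finset.sum_const, smul_eq_mul, Finset.card_univ, Fintype.card_fin]
    calc (K+1) * Bg.card ≤ ∑ b ∈ Bg, 2 * (Finset.univ.filter (fun i => f i b ≠ f i (mid Ball b))).card := step1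
      _ = 2 * ∑ b ∈ Bg, (Finset.univ.filter (fun i => f i b ≠ f i (mid Ball b))).card := by rw [Finset.mul_sum]
      _ ≤ 2 * (K * N) := by rw [step2]; omega
  have hBgcard : Bg.card ≤ 2 * N - 1 := by
    by_contra hcon
    push_neg at hcon
    have h1 : 2 * N ≤ Bg.card := by omega
    have h2 : (K+1) * (2*N) ≤ (K+1) * Bg.card := Nat.mul_le_mul_left _ h1
    nlinarith
  exact stepOn_to_isStepFun (fun b hb => hBallsub (hBgsub hb)) hBgcard hBgstep
end
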